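/- arXiv:math/0609373 — 4 statements merged into one kernel-verified Lean document; each statement's English description precedes it below -/
import Mathlib

section
/- Suppose P₀/Q₀ is a reduced proper fraction lying in an open interval (a, b) ⊆ (0,1), such that Q₀ is minimal among denominators of reduced fractions in (a,b). Then P₀ is minimal among numerators of reduced proper fractions in (a,b). -/
/-- Stern–Brocot ancestor lemma: for an interval `[xn/xd, yn/yd]` with `1 ≤ xn/xd ≤ yn/yd`,
there is a reduced fraction `u/v` in the interval such that every coprime fraction `p/q`
in the interval satisfies `u ≤ p`, `v ≤ q`, and `u = p → v = q`. -/
lemma sb_aux : ∀ N : ℕ, ∀ xn xd yn yd : ℕ, 0 < xd → 0 < yd → xn + xd + yn + yd ≤ N →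
    xd ≤ xn → xn * yd ≤ yn * xd →
    ∃ u v : ℕ, 0 < u ∧ 0 < v ∧ Nat.Coprime u v ∧
      xn * v ≤ u * xd ∧ u * yd ≤ yn * v ∧
      ∀ p q : ℕ, 0 < q → Nat.Coprime p q → xn * q ≤ p * xd → p * yd ≤ yn * q →
        u ≤ p ∧ v ≤ q ∧ (u = p → v = q) := by
  intro N
  induction N with
  | zero =>
    intro xn xd yn yd hxd hyd hN hx1 hxy
    exact absurd hN (by omega)
  | succ N ih =>
    intro xn xd yn yd hxd hyd hN hx1 hxy
    have hxn : 0 < xn := lt_of_lt_of_le hxd hx1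
    have hyn : 0 < yn := by
      rcases Nat.eq_zero_or_pos yn with h | h
      · subst h
        simp [Nat.mul_eq_zero] at hxy
        omega
      · exact h
    -- n := ⌈x⌉ - 1
    obtain ⟨n, hn1, hn2⟩ : ∃ n : ℕ, n * xd < xn ∧ xn ≤ (n + 1) * xd := by
      refine ⟨(xn - 1) / xd, ?_, ?_⟩
      · exact lt_of_le_of_lt (Nat.div_mul_le_self _ _) (Nat.sub_lt hxn one_pos)
      · have h := Nat.lt_div_mul_add (a := xn - 1) hxd
        have h2 : xn ≤ (xn - 1) / xd * xd + xd := Nat.le_of_pred_lt h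
        calc xn ≤ (xn - 1) / xd * xd + xd := h2
          _ = ((xn - 1) / xd + 1) * xd := by ring
    by_cases hcase : (n + 1) * yd ≤ yn
    · -- Case A: the integer n+1 lies in the interval
      refine ⟨n + 1, 1, Nat.succ_pos n, one_pos, Nat.coprime_one_right _,
        by simpa using hn2, by simpa using hcase, ?_⟩
      intro p q hq hpq hxp hpy
      have hnq : n * q < p := by
        have h : (n * q) * xd < p * xd := by
          calc (n * q) * xd = (n * xd) * q := by ring
            _ < xn * q := (Nat.mul_lt_mul_right hq).mpr hn1
            _ ≤ p * xd := hxp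
        exact (Nat.mul_lt_mul_right hxd).mp h
      have hup : n + 1 ≤ p := by
        have h5 : n * 1 ≤ n * q := Nat.mul_le_mul_left n hq
        have : n < p := lt_of_le_of_lt (by simpa using h5) hnq
        omega
      refine ⟨hup, hq, ?_⟩
      intro hp
      by_cases hn0 : 0 < n
      · have h6 : n * q < n + 1 := hp ▸ hnq
        have h7 : n * q ≤ n := Nat.lt_succ_iff.mp h6
        have h8 : n * q ≤ n * 1 := by simpa using h7
        have h9 : q ≤ 1 := Nat.le_of_mul_le_mul_left h8 hn0
        omega
      · have hn' : n = 0 := by omega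
        have hp1 : p = 1 := by omega
        have h10 : xn * q ≤ xn := by
          calc xn * q ≤ p * xd := hxp
            _ = xd := by rw [hp1, one_mul]
            _ ≤ xn := hx1
        have h11 : xn * q ≤ xn * 1 := by simpa using h10
        have h12 : q ≤ 1 := Nat.le_of_mul_le_mul_left h11 hxn
        omega
    · -- Case B: no integer in the interval; recurse on the reciprocal interval
      push_neg at hcase
      -- n ≥ 1
      have hn0 : 0 < n := by
        by_contra h
        have hn' : n = 0 := by omega
        rw [hn'] at hcase
        have hyy : yn < yd := by simpa using hcase
        have : xd * yd < xd * yd := by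
          calc xd * yd ≤ xn * yd := Nat.mul_le_mul_right yd hx1
            _ ≤ yn * xd := hxy
            _ < yd * xd := (Nat.mul_lt_mul_right hxd).mpr hyy
            _ = xd * yd := Nat.mul_comm _ _
        exact absurd this (lt_irrefl _)
      have hn1y : n * yd < yn := by
        have h : (n * yd) * xd < yn * xd := by
          calc (n * yd) * xd = (n * xd) * yd := by ring
            _ < xn * yd := (Nat.mul_lt_mul_right hyd).mpr hn1
            _ ≤ yn * xd := hxy
        exact (Nat.mul_lt_mul_right hxd).mp h
      obtain ⟨A, hA, hA0⟩ : ∃ A, yn = n * yd + A ∧ 0 < A :=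
        ⟨yn - n * yd, (Nat.add_sub_cancel' hn1y.le).symm, Nat.sub_pos_of_lt hn1y⟩
      obtain ⟨B, hB, hB0⟩ : ∃ B, xn = n * xd + B ∧ 0 < B :=
        ⟨xn - n * xd, (Nat.add_sub_cancel' hn1.le).symm, Nat.sub_pos_of_lt hn1⟩
      -- A < yd
      have hAyd : A ≤ yd := by
        have h : n * yd + A < n * yd + yd := by
          rw [← hA]
          calc yn < (n + 1) * yd := hcase
            _ = n * yd + yd := by ring
        exact (Nat.lt_of_add_lt_add_left h).le
      -- measure decreases
      have hmes : yd + A + xd + B ≤ N := by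
        have m1 : A + yd ≤ yn := by
          calc A + yd ≤ A + n * yd := Nat.add_le_add_left (Nat.le_mul_of_pos_left yd hn0) A
            _ = yn := by omega
        have m2 : B + xd ≤ xn := by
          calc B + xd ≤ B + n * xd := Nat.add_le_add_left (Nat.le_mul_of_pos_left xd hn0) B
            _ = xn := by omega
        omega
      -- x' ≤ y' :  yd * B ≤ xd * A
      have hx'y' : yd * B ≤ xd * A := by
        have e2 : n * (xd * yd) + B * yd ≤ n * (yd * xd) + A * xd := by
          calc n * (xd * yd) + B * yd = (n * xd + B) * yd := by ring
            _ = xn * yd := by rw [← hB]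
            _ ≤ yn * xd := hxy
            _ = (n * yd + A) * xd := by rw [hA]
            _ = n * (yd * xd) + A * xd := by ring
        rw [Nat.mul_comm yd xd] at e2
        have e3 : B * yd ≤ A * xd := Nat.le_of_add_le_add_left e2
        calc yd * B = B * yd := Nat.mul_comm _ _
          _ ≤ A * xd := e3
          _ = xd * A := Nat.mul_comm _ _
      obtain ⟨u', v', hu'0, hv'0, hcop', hx'z, hzy', hprop'⟩ :=
        ih yd A xd B hA0 hB0 hmes hAyd hx'y'
      refine ⟨n * u' + v', u', lt_of_lt_of_le hv'0 (Nat.le_add_left _ _), hu'0, ?_, ?_, ?_, ?_⟩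
      · -- coprimality
        have : Nat.gcd (n * u' + v') u' = Nat.gcd v' u' := by
          rw [add_comm]
          exact Nat.gcd_add_mul_right_left u' v' n
        unfold Nat.Coprime
        rw [this]
        exact Nat.coprime_comm.mp hcop'
      · -- xn * u' ≤ (n * u' + v') * xd
        calc xn * u' = (n * xd + B) * u' := by rw [← hB]
          _ = n * (u' * xd) + u' * B := by ring
          _ ≤ n * (u' * xd) + xd * v' := Nat.add_le_add_left hzy' _
          _ = (n * u' + v') * xd := by ring
      · -- (n * u' + v') * yd ≤ yn * u'
        calc (n * u' + v') * yd = n * (u' * yd) + yd * v' := by ring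
          _ ≤ n * (u' * yd) + u' * A := Nat.add_le_add_left hx'z _
          _ = (n * yd + A) * u' := by ring
          _ = yn * u' := by rw [← hA]
      · -- the minimality property
        intro p q hq hpq hxp hpy
        have hnq : n * q < p := by
          have h : (n * q) * xd < p * xd := by
            calc (n * q) * xd = (n * xd) * q := by ring
              _ < xn * q := (Nat.mul_lt_mul_right hq).mpr hn1
              _ ≤ p * xd := hxp
          exact (Nat.mul_lt_mul_right hxd).mp h
        obtain ⟨q1, hq1, hq10⟩ : ∃ q1, p = n * q + q1 ∧ 0 < q1 :=
          ⟨p - n * q, (Nat.add_sub_cancel' hnq.le).symm, Nat.sub_pos_of_lt hnq⟩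
        have hcq : Nat.Coprime q q1 := by
          have h := hpq.symm
          unfold Nat.Coprime at h ⊢
          rw [hq1, add_comm] at h
          rwa [Nat.gcd_add_mul_right_right] at h
        -- yd * q1 ≤ q * A
        have hc1 : yd * q1 ≤ q * A := by
          have e2 : n * (q * yd) + q1 * yd ≤ n * (yd * q) + A * q := by
            calc n * (q * yd) + q1 * yd = (n * q + q1) * yd := by ring
              _ = p * yd := by rw [← hq1]
              _ ≤ yn * q := hpy
              _ = (n * yd + A) * q := by rw [hA]
              _ = n * (yd * q) + A * q := by ring
          rw [Nat.mul_comm yd q] at e2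
          have e3 : q1 * yd ≤ A * q := Nat.le_of_add_le_add_left e2
          calc yd * q1 = q1 * yd := Nat.mul_comm _ _
            _ ≤ A * q := e3
            _ = q * A := Nat.mul_comm _ _
        -- q * B ≤ xd * q1
        have hc2 : q * B ≤ xd * q1 := by
          have e2 : n * (xd * q) + B * q ≤ n * (q * xd) + q1 * xd := by
            calc n * (xd * q) + B * q = (n * xd + B) * q := by ring
              _ = xn * q := by rw [← hB]
              _ ≤ p * xd := hxp
              _ = (n * q + q1) * xd := by rw [hq1]
              _ = n * (q * xd) + q1 * xd := by ring
          rw [Nat.mul_comm xd q] at e2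
          have e3 : B * q ≤ q1 * xd := Nat.le_of_add_le_add_left e2
          calc q * B = B * q := Nat.mul_comm _ _
            _ ≤ q1 * xd := e3
            _ = xd * q1 := Nat.mul_comm _ _
        obtain ⟨hu'q, hv'q1, hrig⟩ := hprop' q q1 hq10 hcq hc1 hc2
        refine ⟨?_, hu'q, ?_⟩
        · calc n * u' + v' ≤ n * q + q1 :=
            Nat.add_le_add (Nat.mul_le_mul_left n hu'q) hv'q1
            _ = p := hq1.symm
        · intro he
          have he2 : n * u' + v' = n * q + q1 := by rw [he, hq1]
          have h1 : n * u' ≤ n * q := Nat.mul_le_mul_left n hu'q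
          have h3 : n * q + q1 ≤ n * u' + q1 := by
            calc n * q + q1 = n * u' + v' := he2.symm
              _ ≤ n * u' + q1 := Nat.add_le_add_left hv'q1 _
          have h4 : n * q ≤ n * u' := Nat.le_of_add_le_add_right h3
          exact Nat.eq_of_mul_eq_mul_left hn0 (le_antisymm h1 h4)

/-- Cross-multiplied inequality to rational division inequality. -/
lemma cross_le {a b c d : ℕ} (hb : 0 < b) (hd : 0 < d) (h : a * d ≤ c * b) :
    (a : ℚ) / b ≤ (c : ℚ) / d := by
  rw [div_le_div_iff₀ (by exact_mod_cast hb) (by exact_mod_cast hd)]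
  exact_mod_cast h

theorem stmt1 (a b : ℚ) (ha : 0 ≤ a) (hab : a < b) (hb : b ≤ 1)
    (P0 Q0 : ℕ) (hP0 : 0 < P0) (hPQ : P0 < Q0) (hcop : Nat.Coprime P0 Q0)
    (hmem : a < (P0 : ℚ) / Q0 ∧ (P0 : ℚ) / Q0 < b)
    (hmin : ∀ p q : ℕ, 0 < p → p < q → Nat.Coprime p q →
      a < (p : ℚ) / q → (p : ℚ) / q < b → Q0 ≤ q) :
    ∀ p q : ℕ, 0 < p → p < q → Nat.Coprime p q →
      a < (p : ℚ) / q → (p : ℚ) / q < b → P0 ≤ p := by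
  intro p q hp hpq hpqcop hap hpb
  have hq0 : 0 < q := lt_trans hp hpq
  have hQ0 : 0 < Q0 := lt_trans hP0 hPQ
  -- set x = min of the two fractions, y = max (as nat pairs)
  obtain ⟨xn, xd, yn, yd, hxn, hxd, hyn, hyd, hynyd, hxy, hax, hyb, hPx, hPy, hpx, hpy⟩ :
      ∃ xn xd yn yd : ℕ, 0 < xn ∧ 0 < xd ∧ 0 < yn ∧ 0 < yd ∧ yn < yd ∧ xn * yd ≤ yn * xd ∧
        a < (xn : ℚ) / xd ∧ (yn : ℚ) / yd < b ∧
        xn * Q0 ≤ P0 * xd ∧ P0 * yd ≤ yn * Q0 ∧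
        xn * q ≤ p * xd ∧ p * yd ≤ yn * q := by
    by_cases hc : p * Q0 ≤ P0 * q
    · exact ⟨p, q, P0, Q0, hp, hq0, hP0, hQ0, hPQ, hc, hap, hmem.2,
        hc, le_refl _, le_refl _, hc⟩
    · push_neg at hc
      exact ⟨P0, Q0, p, q, hP0, hQ0, hp, hq0, hpq, hc.le, hmem.1, hpb,
        le_refl _, hc.le, hc.le, le_refl _⟩
  -- apply the lemma to the reciprocal interval [yd/yn, xd/xn]
  obtain ⟨u', v', hu'0, hv'0, hcop', hx'z, hzy', hprop'⟩ :=
    sb_aux (yd + yn + xd + xn) yd yn xd xn hyn hxn (le_refl _) hynyd.le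
      (by calc yd * xn = xn * yd := Nat.mul_comm _ _
        _ ≤ yn * xd := hxy
        _ = xd * yn := Nat.mul_comm _ _)
  -- u/v := v'/u' is the minimal fraction in [xn/xd, yn/yd]
  -- it lies strictly between a and b
  have huv1 : (xn : ℚ) / xd ≤ (v' : ℚ) / u' := by
    apply cross_le hxd hu'0
    calc xn * u' = u' * xn := Nat.mul_comm _ _
      _ ≤ xd * v' := hzy'
      _ = v' * xd := Nat.mul_comm _ _
  have huv2 : (v' : ℚ) / u' ≤ (yn : ℚ) / yd := by
    apply cross_le hu'0 hyd
    calc v' * yd = yd * v' := Nat.mul_comm _ _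
      _ ≤ u' * yn := hx'z
      _ = yn * u' := Nat.mul_comm _ _
  have hav : a < (v' : ℚ) / u' := lt_of_lt_of_le hax huv1
  have hvb : (v' : ℚ) / u' < b := lt_of_le_of_lt huv2 hyb
  have hv'u' : v' < u' := by
    have h : yd * v' < yd * u' := by
      calc yd * v' ≤ u' * yn := hx'z
        _ < u' * yd := (Nat.mul_lt_mul_left hu'0).mpr hynyd
        _ = yd * u' := Nat.mul_comm _ _
    exact Nat.lt_of_mul_lt_mul_left h
  -- minimality of Q0 gives Q0 ≤ u'
  have hQu : Q0 ≤ u' := hmin v' u' hv'0 hv'u' hcop'.symm hav hvb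
  -- apply the property to P0/Q0: we get u' ≤ Q0, hence u' = Q0, hence v' = P0
  obtain ⟨hu'Q, hv'P, hrigP⟩ := hprop' Q0 P0 hP0 hcop.symm
    (by calc yd * P0 = P0 * yd := Nat.mul_comm _ _
      _ ≤ yn * Q0 := hPy
      _ = Q0 * yn := Nat.mul_comm _ _)
    (by calc Q0 * xn = xn * Q0 := Nat.mul_comm _ _
      _ ≤ P0 * xd := hPx
      _ = xd * P0 := Nat.mul_comm _ _)
  have hu'Q0 : u' = Q0 := le_antisymm hu'Q hQu
  have hv'P0 : v' = P0 := hrigP hu'Q0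
  -- apply the property to p/q: v' ≤ p
  obtain ⟨hu'q, hv'p, _⟩ := hprop' q p hp hpqcop.symm
    (by calc yd * p = p * yd := Nat.mul_comm _ _
      _ ≤ yn * q := hpy
      _ = q * yn := Nat.mul_comm _ _)
    (by calc q * xn = xn * q := Nat.mul_comm _ _
      _ ≤ p * xd := hpx
      _ = xd * p := Nat.mul_comm _ _)
  calc P0 = v' := hv'P0.symm
    _ ≤ p := hv'p
end

section
/- Suppose P₀/Q₀ is a reduced proper fraction in an open interval (a,b) ⊆ (0,1) with minimal denominator. Then P₀ is the unique numerator achieving the minimal denominator: if p/q ∈ (a,b) is reduced with q = Q₀, then p = P₀. -/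
/-!
If two fractions `p/Q < p'/Q` with `0 < p` and `p' < Q` lie in `(a, b)`, then so does `p/(Q - 1)`,
because `p/Q < p/(Q - 1) < p'/Q`. Reducing `p/(Q - 1)` gives a reduced fraction in `(a, b)` with
denominator below `Q`, so `Q` is not the minimal denominator.
-/

lemma Nat.exists_coprime_div_eq_div {m n : ℕ} (hm : 0 < m) (hmn : m < n) :
    ∃ p q : ℕ, 0 < p ∧ p < q ∧ p.Coprime q ∧ q ≤ n ∧ (p : ℚ) / q = m / n := by
  set g := m.gcd n
  have hg : 0 < g := Nat.gcd_pos_of_pos_left n hm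
  have hgm : g ∣ m := Nat.gcd_dvd_left m n
  have hgn : g ∣ n := Nat.gcd_dvd_right m n
  refine ⟨m / g, n / g, Nat.div_pos (Nat.le_of_dvd hm hgm) hg,
    Nat.div_lt_div_of_lt_of_dvd hgn hmn, Nat.coprime_div_gcd_div_gcd hg, Nat.div_le_self n g, ?_⟩
  have hg0 : (g : ℚ) ≠ 0 := by exact_mod_cast hg.ne'
  rw [Nat.cast_div hgm hg0, Nat.cast_div hgn hg0]
  field_simp

lemma div_succ_lt_div_lt_div_succ {p p' n : ℕ} (hp : 0 < p) (hpp' : p < p') (hp'n : p' ≤ n) :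
    (p : ℚ) / (n + 1) < p / n ∧ (p : ℚ) / n < p' / (n + 1) := by
  have hn : (0 : ℚ) < n := by exact_mod_cast hp.trans_le (hpp'.le.trans hp'n)
  constructor
  · exact div_lt_div_of_pos_left (by exact_mod_cast hp) hn (lt_add_one _)
  · rw [div_lt_div_iff₀ hn (by positivity)]
    have : p * (n + 1) < p' * n := by nlinarith
    exact_mod_cast this

lemma false_of_two_numerators_of_minimal_denom {a b : ℚ} {Q p p' : ℕ}
    (hmin : ∀ p q : ℕ, 0 < p → p < q → Nat.Coprime p q →
      a < (p : ℚ) / q → (p : ℚ) / q < b → Q ≤ q)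
    (hp : 0 < p) (hpp' : p < p') (hp'Q : p' < Q)
    (ha : a < (p : ℚ) / Q) (hb : (p' : ℚ) / Q < b) : False := by
  obtain ⟨n, rfl⟩ : ∃ n, Q = n + 1 := ⟨Q - 1, by omega⟩
  obtain ⟨hlo, hhi⟩ := div_succ_lt_div_lt_div_succ hp hpp' (Nat.le_of_lt_succ hp'Q)
  push_cast at ha hb
  obtain ⟨r, s, hr, hrs, hcop, hsn, hrs_eq⟩ :=
    Nat.exists_coprime_div_eq_div hp (show p < n by omega)
  have := hmin r s hr hrs hcop (by rw [hrs_eq]; linarith) (by rw [hrs_eq]; linarith)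
  omega

theorem stmt2_general (a b : ℚ)
    (P0 Q0 : ℕ) (hP0 : 0 < P0) (hPQ : P0 < Q0)
    (hmem : a < (P0 : ℚ) / Q0 ∧ (P0 : ℚ) / Q0 < b)
    (hmin : ∀ p q : ℕ, 0 < p → p < q → Nat.Coprime p q →
      a < (p : ℚ) / q → (p : ℚ) / q < b → Q0 ≤ q) :
    ∀ p q : ℕ, 0 < p → p < q → Nat.Coprime p q →
      a < (p : ℚ) / q → (p : ℚ) / q < b → q = Q0 → p = P0 := by
  rintro p q hp hpq - ha hb rfl
  rcases lt_trichotomy p P0 with h | h | h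
  · exact (false_of_two_numerators_of_minimal_denom hmin hp h hPQ ha hmem.2).elim
  · exact h
  · exact (false_of_two_numerators_of_minimal_denom hmin hP0 h hpq hmem.1 hb).elim

theorem stmt2 (a b : ℚ) (ha : 0 ≤ a) (hab : a < b) (hb : b ≤ 1)
    (P0 Q0 : ℕ) (hP0 : 0 < P0) (hPQ : P0 < Q0) (hcop : Nat.Coprime P0 Q0)
    (hmem : a < (P0 : ℚ) / Q0 ∧ (P0 : ℚ) / Q0 < b)
    (hmin : ∀ p q : ℕ, 0 < p → p < q → Nat.Coprime p q →
      a < (p : ℚ) / q → (p : ℚ) / q < b → Q0 ≤ q) :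
    ∀ p q : ℕ, 0 < p → p < q → Nat.Coprime p q →
      a < (p : ℚ) / q → (p : ℚ) / q < b → q = Q0 → p = P0 :=
  stmt2_general a b P0 Q0 hP0 hPQ hmem hmin
end

section
/- Let a, b be positive rationals with a < b, and W a positive integer. If P/Q is the reduced fraction in (a, b) with minimal denominator and minimal numerator, then Q/(W·Q + P) is the reduced fraction in (1/(W+b), 1/(W+a)) with minimal denominator and minimal numerator. -/
/-!
The map `x ↦ 1 / (W + x)` is an order-reversing bijection from `(a, b)` onto
`(1 / (W + b), 1 / (W + a))`, sending `P / Q` to `Q / (W Q + P)`; on reduced fractions its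
inverse sends `p / q` to `(q - W p) / p`, again reduced. A reduced fraction in the image interval
therefore has denominator `W p + r` and numerator `p`, where `r / p` is a reduced fraction in
`(a, b)`, so both are bounded below by those of `Q / (W Q + P)`.
-/

section OneDivAdd

variable {K : Type*} [Field K] [LinearOrder K] [IsStrictOrderedRing K] {a b c : K}

theorem one_div_sub_mem_Ioo_iff {y : K} (hca : 0 < c + a) (hab : a < b) (hy : 0 < y) :
    1 / y - c ∈ Set.Ioo a b ↔ y ∈ Set.Ioo (1 / (c + b)) (1 / (c + a)) := by
  have hcb : 0 < c + b := by linarith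
  simp only [Set.mem_Ioo, lt_sub_iff_add_lt', sub_lt_iff_lt_add', lt_one_div hca hy,
    one_div_lt hy hcb]
  exact and_comm

theorem one_div_add_mem_Ioo {x : K} (hca : 0 < c + a) (hx : x ∈ Set.Ioo a b) :
    1 / (c + x) ∈ Set.Ioo (1 / (c + b)) (1 / (c + a)) := by
  have hcx : 0 < c + x := by linarith [hx.1]
  rw [← one_div_sub_mem_Ioo_iff hca (hx.1.trans hx.2) (one_div_pos.2 hcx), one_div_one_div,
    add_sub_cancel_left]
  exact hx

end OneDivAdd

theorem div_mul_add_eq_one_div_add {K : Type*} [Field K] (W P Q : K) (hQ : Q ≠ 0) :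
    Q / (W * Q + P) = 1 / (W + P / Q) := by
  rw [add_div' P W Q hQ, one_div_div]

theorem Nat.exists_eq_mul_add_and_div_sub_eq {W p q : ℕ} (hp : 0 < p) (h : (W : ℚ) < q / p) :
    ∃ r : ℕ, q = W * p + r ∧ (q : ℚ) / p - W = r / p := by
  have hp' : (0 : ℚ) < p := by exact_mod_cast hp
  have hle : W * p ≤ q := by exact_mod_cast ((lt_div_iff₀ hp').1 h).le
  obtain ⟨r, rfl⟩ := Nat.exists_eq_add_of_le hle
  refine ⟨r, rfl, ?_⟩
  push_cast
  field_simp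
  ring

theorem stmt4_general (a b : ℚ) (ha : 0 < a) (hab : a < b) (W : ℕ)
    (P Q : ℕ) (hQ : 0 < Q) (hcop : Nat.Coprime P Q)
    (hmem : a < (P : ℚ) / Q ∧ (P : ℚ) / Q < b)
    (hminden : ∀ p q : ℕ, 0 < p → 0 < q → Nat.Coprime p q →
      a < (p : ℚ) / q → (p : ℚ) / q < b → Q ≤ q)
    (hminnum : ∀ p q : ℕ, 0 < p → 0 < q → Nat.Coprime p q →
      a < (p : ℚ) / q → (p : ℚ) / q < b → P ≤ p) :
    Nat.Coprime Q (W * Q + P) ∧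
    (1 / ((W : ℚ) + b) < (Q : ℚ) / (W * Q + P) ∧
      (Q : ℚ) / (W * Q + P) < 1 / ((W : ℚ) + a)) ∧
    (∀ p q : ℕ, 0 < p → 0 < q → Nat.Coprime p q →
      1 / ((W : ℚ) + b) < (p : ℚ) / q → (p : ℚ) / q < 1 / ((W : ℚ) + a) →
      W * Q + P ≤ q ∧ Q ≤ p) := by
  have hWa : 0 < (W : ℚ) + a := by positivity
  refine ⟨(Nat.coprime_mul_right_add_right Q P W).2 hcop.symm, ?_, ?_⟩
  · rw [div_mul_add_eq_one_div_add _ _ _ (by positivity)]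
    exact one_div_add_mem_Ioo hWa hmem
  intro p q hp hq hpq h₁ h₂
  have hx := (one_div_sub_mem_Ioo_iff hWa hab (by positivity)).2 ⟨h₁, h₂⟩
  rw [one_div_div] at hx
  obtain ⟨r, rfl, hr⟩ := Nat.exists_eq_mul_add_and_div_sub_eq hp (sub_pos.1 (ha.trans hx.1))
  rw [hr] at hx
  have hr₀ : 0 < r := by
    have : (0 : ℚ) < r / p := ha.trans hx.1
    exact_mod_cast (div_pos_iff_of_pos_right (by positivity)).1 this
  have hrp : r.Coprime p := ((Nat.coprime_mul_right_add_right p r W).1 hpq).symm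
  have hQp := hminden r p hr₀ hp hrp hx.1 hx.2
  exact ⟨add_le_add (Nat.mul_le_mul_left W hQp) (hminnum r p hr₀ hp hrp hx.1 hx.2), hQp⟩

theorem stmt4 (a b : ℚ) (ha : 0 < a) (hab : a < b) (W : ℕ) (hW : 0 < W)
    (P Q : ℕ) (hP : 0 < P) (hQ : 0 < Q) (hcop : Nat.Coprime P Q)
    (hmem : a < (P : ℚ) / Q ∧ (P : ℚ) / Q < b)
    (hminden : ∀ p q : ℕ, 0 < p → 0 < q → Nat.Coprime p q →
      a < (p : ℚ) / q → (p : ℚ) / q < b → Q ≤ q)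
    (hminnum : ∀ p q : ℕ, 0 < p → 0 < q → Nat.Coprime p q →
      a < (p : ℚ) / q → (p : ℚ) / q < b → P ≤ p) :
    Nat.Coprime Q (W * Q + P) ∧
    (1 / ((W : ℚ) + b) < (Q : ℚ) / (W * Q + P) ∧
      (Q : ℚ) / (W * Q + P) < 1 / ((W : ℚ) + a)) ∧
    (∀ p q : ℕ, 0 < p → 0 < q → Nat.Coprime p q →
      1 / ((W : ℚ) + b) < (p : ℚ) / q → (p : ℚ) / q < 1 / ((W : ℚ) + a) →
      W * Q + P ≤ q ∧ Q ≤ p) :=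
  stmt4_general a b ha hab W P Q hQ hcop hmem hminden hminnum
end

section
/- Let W be a positive integer and let 0 < a < b ≤ 1 be rationals. If q is the minimal denominator of a reduced fraction in (a, b) and Q is the minimal denominator of a reduced fraction in (1/(W+b), 1/(W+a)), then Q = W·q + p, where p/q is the minimal-denominator reduced fraction in (a, b). -/
/-- Farey-type lemma: a reduced fraction `p/q` with `2 ≤ p < q` has a left
neighbour `u/v` with `v < q` and `p*v = u*q + 1`. -/
lemma farey_left_neighbor (p q : ℕ) (hp : 2 ≤ p) (hpq : p < q)
    (hcop : Nat.Coprime p q) :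
    ∃ u v : ℕ, 0 < u ∧ 0 < v ∧ v < q ∧ Nat.Coprime u v ∧ p * v = u * q + 1 := by
  haveI : NeZero q := ⟨by omega⟩
  have hinv : (↑p : ZMod q) * (↑p : ZMod q)⁻¹ = 1 := ZMod.coe_mul_inv_eq_one p hcop
  obtain ⟨v, hvlt, hvC⟩ : ∃ v : ℕ, v < q ∧ ((v : ℕ) : ZMod q) = (↑p : ZMod q)⁻¹ :=
    ⟨((↑p : ZMod q)⁻¹).val, ZMod.val_lt _, ZMod.natCast_rightInverse _⟩
  have hvpos : 0 < v := by
    rcases Nat.eq_zero_or_pos v with h | h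
    · exfalso
      have h1q : (1:ℕ) < q := by omega
      haveI : Fact (1 < q) := ⟨h1q⟩
      rw [h] at hvC
      simp at hvC
      rw [← hvC, mul_zero] at hinv
      exact zero_ne_one hinv
    · exact h
  have hmod : p * v % q = 1 % q := by
    apply (ZMod.natCast_eq_natCast_iff _ _ _).mp
    push_cast
    rw [hvC]
    simpa using hinv
  have hmod' : p * v % q = 1 := by
    rwa [Nat.mod_eq_of_lt (by omega : 1 < q)] at hmod
  obtain ⟨u, hueq⟩ : ∃ u : ℕ, p * v = u * q + 1 := by
    refine ⟨p * v / q, ?_⟩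
    have h := Nat.div_add_mod (p * v) q
    rw [hmod'] at h
    rw [Nat.mul_comm (p * v / q) q]
    omega
  have hupos : 0 < u := by
    have h2 : 2 ≤ p * v := le_trans hp (Nat.le_mul_of_pos_right p hvpos)
    rcases Nat.eq_zero_or_pos u with h | h
    · rw [h, Nat.zero_mul, Nat.zero_add] at hueq
      omega
    · exact h
  refine ⟨u, v, hupos, hvpos, hvlt, ?_, hueq⟩
  have hd : Nat.gcd u v ∣ 1 := by
    have h1 : Nat.gcd u v ∣ u * q := Dvd.dvd.mul_right (Nat.gcd_dvd_left _ _) q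
    have h2 : Nat.gcd u v ∣ p * v := Dvd.dvd.mul_left (Nat.gcd_dvd_right _ _) p
    have h3 := Nat.dvd_sub h2 h1
    rw [hueq, Nat.add_sub_cancel_left] at h3
    exact h3
  exact Nat.dvd_one.mp hd

theorem stmt17 (W : ℕ) (hW : 0 < W) (a b : ℚ) (ha : 0 < a) (hab : a < b)
    (hb : b ≤ 1) (p q : ℕ) (hp : 0 < p) (hq : 0 < q) (hcop : Nat.Coprime p q)
    (hmem : a < (p : ℚ) / q ∧ (p : ℚ) / q < b)
    (hmin : ∀ p' q' : ℕ, 0 < p' → 0 < q' → Nat.Coprime p' q' →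
      a < (p' : ℚ) / q' → (p' : ℚ) / q' < b → q ≤ q')
    (P Q : ℕ) (hP : 0 < P) (hQ : 0 < Q) (hcop' : Nat.Coprime P Q)
    (hmem' : 1 / ((W : ℚ) + b) < (P : ℚ) / Q ∧ (P : ℚ) / Q < 1 / ((W : ℚ) + a))
    (hmin' : ∀ p' q' : ℕ, 0 < p' → 0 < q' → Nat.Coprime p' q' →
      1 / ((W : ℚ) + b) < (p' : ℚ) / q' → (p' : ℚ) / q' < 1 / ((W : ℚ) + a) →
      Q ≤ q') :
    Q = W * q + p := by
  have hqQ : (0:ℚ) < q := by exact_mod_cast hq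
  have hpQ : (0:ℚ) < p := by exact_mod_cast hp
  have hPQ : (0:ℚ) < P := by exact_mod_cast hP
  have hQQ : (0:ℚ) < Q := by exact_mod_cast hQ
  have hWQ : (0:ℚ) < W := by exact_mod_cast hW
  have hA : (0:ℚ) < (W:ℚ) + a := by linarith
  have hB : (0:ℚ) < (W:ℚ) + b := by linarith
  -- p < q
  have hplt : p < q := by
    have h1 : (p:ℚ)/q < 1 := lt_of_lt_of_le hmem.2 hb
    have : (p:ℚ) < q := by rwa [div_lt_one hqQ] at h1
    exact_mod_cast this
  -- Step 1 : Q ≤ W*q + p via the image fraction q/(W*q+p)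
  have hDpos : (0:ℚ) < (W:ℚ) * q + p := by positivity
  have hcast : ((W * q + p : ℕ) : ℚ) = (W:ℚ) * q + p := by push_cast; ring
  have hcop1 : Nat.Coprime q (W * q + p) := by
    have h := hcop.symm
    simp [Nat.add_comm, Nat.mul_comm]
    exact h
  have h1lt : 1 / ((W : ℚ) + b) < (q : ℚ) / (W * q + p : ℕ) := by
    rw [hcast, div_lt_div_iff₀ hB hDpos, one_mul]
    have h2 : (p:ℚ) < b * q := by
      have := hmem.2
      rwa [div_lt_iff₀ hqQ] at this
    nlinarith
  have h2lt : (q : ℚ) / (W * q + p : ℕ) < 1 / ((W : ℚ) + a) := by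
    rw [hcast, div_lt_div_iff₀ hDpos hA, one_mul]
    have h2 : a * q < p := by
      have := hmem.1
      rwa [lt_div_iff₀ hqQ] at this
    nlinarith
  have hQle : Q ≤ W * q + p := hmin' q (W * q + p) hq (by positivity) hcop1 h1lt h2lt
  -- Step 2 : preimage of P/Q
  have hPB : (Q:ℚ) < (P:ℚ) * ((W:ℚ) + b) := by
    have := hmem'.1
    rwa [div_lt_div_iff₀ hB hQQ, one_mul] at this
  have hPA : (P:ℚ) * ((W:ℚ) + a) < Q := by
    have := hmem'.2
    rwa [div_lt_div_iff₀ hQQ hA, one_mul] at this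
  have hWPltQ : W * P < Q := by
    have : (W:ℚ) * P < Q := by nlinarith
    exact_mod_cast this
  obtain ⟨p', hQeq⟩ : ∃ p' : ℕ, Q = W * P + p' := ⟨Q - W * P, by omega⟩
  have hp'pos : 0 < p' := by omega
  have hp'cast : (Q:ℚ) = (W:ℚ) * P + p' := by
    rw [hQeq]; push_cast; ring
  have hcop2 : Nat.Coprime p' P := by
    have h := hcop'
    rw [hQeq] at h
    simp [Nat.add_comm, Nat.mul_comm] at h
    exact h.symm
  have e1 : (P:ℚ) * ((W:ℚ) + a) = (W:ℚ) * P + a * P := by ring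
  have e2 : (P:ℚ) * ((W:ℚ) + b) = (W:ℚ) * P + b * P := by ring
  have hmem1 : a < (p' : ℚ) / P := by
    rw [lt_div_iff₀ hPQ]
    rw [e1] at hPA
    linarith
  have hmem2 : (p' : ℚ) / P < b := by
    rw [div_lt_iff₀ hPQ]
    rw [e2] at hPB
    linarith
  have hqleP : q ≤ P := hmin p' P hp'pos hP hcop2 hmem1 hmem2
  -- Conclusion
  by_contra hne
  have hQlt : Q < W * q + p := lt_of_le_of_ne hQle hne
  -- then p' < p and p ≥ 2
  have hp'lt : p' < p := by
    have : W * q ≤ W * P := Nat.mul_le_mul_left W hqleP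
    omega
  have hp2 : 2 ≤ p := by omega
  obtain ⟨u, v, hu, hv, hvq, hcopuv, heq⟩ := farey_left_neighbor p q hp2 hplt hcop
  have hvQ : (0:ℚ) < v := by exact_mod_cast hv
  have huQ : (0:ℚ) < u := by exact_mod_cast hu
  have heqQ : (p:ℚ) * v = (u:ℚ) * q + 1 := by exact_mod_cast heq
  -- u/v < p/q < b
  have huv_lt : (u:ℚ) / v < (p:ℚ) / q := by
    rw [div_lt_div_iff₀ hvQ hqQ]
    linarith [heqQ]
  -- p'/P ≤ (p-1)/q ≤ u/v, so a < u/v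
  have hstep1 : (p':ℚ) / P ≤ ((p:ℚ) - 1) / q := by
    rw [div_le_div_iff₀ hPQ hqQ]
    have h1 : (p':ℚ) ≤ (p:ℚ) - 1 := by
      have h3 : p' + 1 ≤ p := hp'lt
      have h4 := (Nat.cast_le (α := ℚ)).mpr h3
      push_cast at h4
      linarith
    have h2 : (q:ℚ) ≤ P := by exact_mod_cast hqleP
    have hpge : (2:ℚ) ≤ p := by exact_mod_cast hp2
    calc (p':ℚ) * q ≤ ((p:ℚ) - 1) * q := mul_le_mul_of_nonneg_right h1 (le_of_lt hqQ)
      _ ≤ ((p:ℚ) - 1) * P := mul_le_mul_of_nonneg_left h2 (by linarith)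
  have hstep2 : ((p:ℚ) - 1) / q ≤ (u:ℚ) / v := by
    rw [div_le_div_iff₀ hqQ hvQ]
    have h1 : (1:ℚ) ≤ v := by exact_mod_cast hv
    have e : ((p:ℚ) - 1) * v = (p:ℚ) * v - v := by ring
    linarith [heqQ]
  have hauv : a < (u:ℚ) / v := lt_of_lt_of_le (lt_of_lt_of_le hmem1 hstep1) hstep2
  have huvb : (u:ℚ) / v < b := lt_trans huv_lt hmem.2
  have := hmin u v hu hv hcopuv hauv huvb
  omega
end
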